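/- arXiv:2507.00186 — 5 statements merged into one kernel-verified Lean document; each statement's English description precedes it below -/
import Mathlib

section
/- Let (Ω, μ) be a probability space, τ : Ω → Ω an ergodic measure-preserving transformation, and f : Ω → ℝ measurable. Suppose there exist a strictly increasing sequence (n_k) of positive integers, positive reals a_{n_k} → ∞, such that S_{n_k} f / a_{n_k} converges in distribution to the standard Gaussian N(0,1). Then for almost every ω, limsup_{n→∞} S_n f(ω) = +∞ and liminf_{n→∞} S_n f(ω) = -∞. -/
/-!
By ergodicity, the τ-invariant event that the Birkhoff sums `S_n f` are bounded above has
measure `0` or `1`, since `S_n f (τ ω) = S_{n+1} f ω - f ω`. If it had measure `1`, then, as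
`a_{n_k} → ∞`, almost every `ω` would eventually satisfy `S_{n_k} f ω / a_{n_k} ≤ 1`, so
`μ (S_{n_k} f / a_{n_k} ≤ 1) → 1 > Φ(1)`. Symmetrically, boundedness below almost surely would
force `μ (S_{n_k} f / a_{n_k} ≤ -1) → 0 < Φ(-1)`.
-/

open MeasureTheory Filter Real Set ProbabilityTheory Topology

section Gaussian

lemma gaussianPDFReal_zero_one (x : ℝ) :
    gaussianPDFReal 0 1 x = (√(2 * π))⁻¹ * exp (-x ^ 2 / 2) := by
  simp [gaussianPDFReal]

lemma setIntegral_gaussianPDFReal_pos (m : ℝ) {v : NNReal} (hv : v ≠ 0) {s : Set ℝ}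
    (hs : volume s ≠ 0) : 0 < ∫ x in s, gaussianPDFReal m v x := by
  rw [setIntegral_pos_iff_support_of_nonneg_ae
    (.of_forall fun x => (gaussianPDFReal_pos m v x hv).le)
    (integrable_gaussianPDFReal m v).integrableOn,
    (eq_univ_of_forall fun x => (gaussianPDFReal_pos m v x hv).ne' :
      Function.support (gaussianPDFReal m v) = univ), univ_inter]
  exact pos_iff_ne_zero.2 hs

lemma setIntegral_Iic_gaussianPDFReal_lt_one (m : ℝ) {v : NNReal} (hv : v ≠ 0) (t : ℝ) :
    ∫ x in Iic t, gaussianPDFReal m v x < 1 := by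
  have hsplit := intervalIntegral.integral_Iic_add_Ioi (b := t)
    (integrable_gaussianPDFReal m v).integrableOn (integrable_gaussianPDFReal m v).integrableOn
  rw [integral_gaussianPDFReal_eq_one m hv] at hsplit
  linarith [setIntegral_gaussianPDFReal_pos m hv (s := Ioi t) (by simp)]

end Gaussian

section Bounds

variable {α : Type*} [LinearOrder α]

lemma frequently_lt_of_not_bddAbove_range {u : ℕ → α} (h : ¬BddAbove (range u)) (C : α) :
    ∃ᶠ n in atTop, C < u n := by
  by_contra hC
  exact h (isBoundedUnder_of_eventually_le
    ((not_frequently.1 hC).mono fun _ => le_of_not_gt)).bddAbove_range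

lemma frequently_gt_of_not_bddBelow_range {u : ℕ → α} (h : ¬BddBelow (range u)) (C : α) :
    ∃ᶠ n in atTop, u n < C :=
  frequently_lt_of_not_bddAbove_range (α := αᵒᵈ) h C

end Bounds

lemma bddAbove_range_birkhoffSum_apply_iff {Ω M : Type*} [AddCommGroup M] [LinearOrder M]
    [IsOrderedAddMonoid M] (τ : Ω → Ω) (f : Ω → M) (ω : Ω) :
    BddAbove (range fun n => birkhoffSum τ f n (τ ω)) ↔
      BddAbove (range fun n => birkhoffSum τ f n ω) := by
  simp only [bddAbove_def, forall_mem_range]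
  constructor
  · rintro ⟨C, hC⟩
    refine ⟨max 0 (f ω + C), fun n => ?_⟩
    cases n with
    | zero => simp
    | succ n =>
      rw [birkhoffSum_succ']
      exact le_max_of_le_right (add_le_add_right (hC n) _)
  · rintro ⟨C, hC⟩
    refine ⟨C - f ω, fun n => ?_⟩
    have := hC (n + 1)
    rw [birkhoffSum_succ'] at this
    exact le_sub_iff_add_le'.2 this

section Ergodic

variable {Ω : Type*} [MeasurableSpace Ω] {μ : Measure Ω} {τ : Ω → Ω} {f : Ω → ℝ}

lemma measurable_birkhoffSum (hτ : Measurable τ) (hf : Measurable f) (n : ℕ) :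
    Measurable (birkhoffSum τ f n) :=
  Finset.measurable_sum _ fun i _ => hf.comp (hτ.iterate i)

lemma Ergodic.ae_bddAbove_or_ae_not_bddAbove_birkhoffSum (hτ : Ergodic τ μ)
    (hf : Measurable f) :
    (∀ᵐ ω ∂μ, BddAbove (range fun n => birkhoffSum τ f n ω)) ∨
      ∀ᵐ ω ∂μ, ¬BddAbove (range fun n => birkhoffSum τ f n ω) := by
  have hinv : τ ⁻¹' {ω | BddAbove (range fun n => birkhoffSum τ f n ω)} =
      {ω | BddAbove (range fun n => birkhoffSum τ f n ω)} :=
    ext fun ω => bddAbove_range_birkhoffSum_apply_iff τ f ω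
  rcases hτ.ae_empty_or_univ
    (measurableSet_bddAbove_range (measurable_birkhoffSum hτ.measurable hf)) hinv with h | h
  · exact .inr (eventuallyEq_empty.1 h)
  · exact .inl (eventuallyEq_univ.1 h)

lemma Ergodic.ae_bddBelow_or_ae_not_bddBelow_birkhoffSum (hτ : Ergodic τ μ)
    (hf : Measurable f) :
    (∀ᵐ ω ∂μ, BddBelow (range fun n => birkhoffSum τ f n ω)) ∨
      ∀ᵐ ω ∂μ, ¬BddBelow (range fun n => birkhoffSum τ f n ω) := by
  have hneg (ω : Ω) : BddAbove (range fun n => birkhoffSum τ (-f) n ω) ↔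
      BddBelow (range fun n => birkhoffSum τ f n ω) := by
    simp only [birkhoffSum_neg]
    rw [← bddAbove_neg, neg_range']
    rfl
  simpa only [hneg] using hτ.ae_bddAbove_or_ae_not_bddAbove_birkhoffSum hf.neg

end Ergodic

section Normalized

variable {Ω : Type*} [MeasurableSpace Ω] {μ : Measure Ω} [IsProbabilityMeasure μ]
  {Y : ℕ → Ω → ℝ} {a : ℕ → ℝ}

lemma tendsto_measure_div_le_of_ae_bddAbove (hY : ∀ k, Measurable (Y k))
    (ha : Tendsto a atTop atTop) (hbdd : ∀ᵐ ω ∂μ, BddAbove (range fun k => Y k ω))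
    {t : ℝ} (ht : 0 < t) :
    Tendsto (fun k => μ {ω | Y k ω / a k ≤ t}) atTop (𝓝 1) := by
  rw [← measure_univ (μ := μ)]
  refine tendsto_measure_of_ae_tendsto_indicator_of_isFiniteMeasure atTop .univ
    (fun k => measurableSet_le ((hY k).div_const _) measurable_const) ?_
  filter_upwards [hbdd] with ω ⟨C, hC⟩
  filter_upwards [ha.eventually_gt_atTop 0, (ha.const_mul_atTop ht).eventually_ge_atTop C]
    with k hpos hC'
  simpa [div_le_iff₀ hpos] using (hC (mem_range_self k)).trans hC'

lemma tendsto_measure_div_le_of_ae_bddBelow (hY : ∀ k, Measurable (Y k))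
    (ha : Tendsto a atTop atTop) (hbdd : ∀ᵐ ω ∂μ, BddBelow (range fun k => Y k ω))
    {t : ℝ} (ht : t < 0) :
    Tendsto (fun k => μ {ω | Y k ω / a k ≤ t}) atTop (𝓝 0) := by
  rw [← measure_empty (μ := μ)]
  refine tendsto_measure_of_ae_tendsto_indicator_of_isFiniteMeasure atTop .empty
    (fun k => measurableSet_le ((hY k).div_const _) measurable_const) ?_
  filter_upwards [hbdd] with ω ⟨C, hC⟩
  filter_upwards [ha.eventually_gt_atTop 0,
    (ha.const_mul_atTop_of_neg ht).eventually_lt_atBot C] with k hpos hC'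
  simpa [div_le_iff₀ hpos] using hC'.trans_le (hC (mem_range_self k))

end Normalized

theorem stmt2_general {Ω : Type*} [MeasurableSpace Ω] (μ : Measure Ω) [IsProbabilityMeasure μ]
    (τ : Ω → Ω) (f : Ω → ℝ) (hτ : Ergodic τ μ) (hf : Measurable f)
    (nk : ℕ → ℕ)
    (a : ℕ → ℝ) (hatop : Tendsto a atTop atTop)
    (hclt : ∀ t : ℝ,
      Tendsto (fun k =>
          (μ {ω | (∑ i ∈ Finset.range (nk k), f (τ^[i] ω)) / a k ≤ t}).toReal)
        atTop
        (nhds (∫ x in Set.Iic t, (Real.sqrt (2 * π))⁻¹ * Real.exp (-x ^ 2 / 2)))) :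
    ∀ᵐ ω ∂μ,
      (∀ C : ℝ, ∃ᶠ n in atTop, C < ∑ i ∈ Finset.range n, f (τ^[i] ω)) ∧
      (∀ C : ℝ, ∃ᶠ n in atTop, (∑ i ∈ Finset.range n, f (τ^[i] ω)) < C) := by
  have hS (k : ℕ) : Measurable (birkhoffSum τ f (nk k)) :=
    measurable_birkhoffSum hτ.measurable hf _
  have hsub (ω : Ω) : range (fun k => birkhoffSum τ f (nk k) ω) ⊆
      range fun n => birkhoffSum τ f n ω :=
    range_comp_subset_range nk fun n => birkhoffSum τ f n ω
  have hΦ (t : ℝ) {L : ENNReal} (hL : L ≠ ⊤)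
      (h : Tendsto (fun k => μ {ω | birkhoffSum τ f (nk k) ω / a k ≤ t}) atTop (𝓝 L)) :
      ∫ x in Iic t, gaussianPDFReal 0 1 x = L.toReal := by
    simp only [gaussianPDFReal_zero_one]
    exact tendsto_nhds_unique (hclt t) ((ENNReal.tendsto_toReal hL).comp h)
  have hunbddAbove : ∀ᵐ ω ∂μ, ¬BddAbove (range fun n => birkhoffSum τ f n ω) := by
    refine (hτ.ae_bddAbove_or_ae_not_bddAbove_birkhoffSum hf).resolve_left fun hbdd => ?_
    have h := hΦ 1 ENNReal.one_ne_top <| tendsto_measure_div_le_of_ae_bddAbove hS hatop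
      (hbdd.mono fun ω h => h.mono (hsub ω)) one_pos
    exact (setIntegral_Iic_gaussianPDFReal_lt_one 0 one_ne_zero 1).ne (by simpa using h)
  have hunbddBelow : ∀ᵐ ω ∂μ, ¬BddBelow (range fun n => birkhoffSum τ f n ω) := by
    refine (hτ.ae_bddBelow_or_ae_not_bddBelow_birkhoffSum hf).resolve_left fun hbdd => ?_
    have h := hΦ (-1) ENNReal.zero_ne_top <| tendsto_measure_div_le_of_ae_bddBelow hS hatop
      (hbdd.mono fun ω h => h.mono (hsub ω)) neg_one_lt_zero
    exact (setIntegral_gaussianPDFReal_pos 0 one_ne_zero (s := Iic (-1)) (by simp)).ne'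
      (by simpa using h)
  filter_upwards [hunbddAbove, hunbddBelow] with ω habove hbelow
  exact ⟨frequently_lt_of_not_bddAbove_range habove,
    frequently_gt_of_not_bddBelow_range hbelow⟩

/-- If a subsequence of the normalized Birkhoff sums of `f` (for an ergodic
measure-preserving `τ`) converges in distribution to the standard Gaussian, then
almost surely `limsup S_n f = +∞` and `liminf S_n f = -∞`. -/
theorem stmt2 {Ω : Type*} [MeasurableSpace Ω] (μ : Measure Ω) [IsProbabilityMeasure μ]
    (τ : Ω → Ω) (f : Ω → ℝ) (hτ : Ergodic τ μ) (hf : Measurable f)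
    (nk : ℕ → ℕ) (hmono : StrictMono nk) (hpos : ∀ k, 1 ≤ nk k)
    (a : ℕ → ℝ) (ha : ∀ k, 0 < a k) (hatop : Tendsto a atTop atTop)
    (hclt : ∀ t : ℝ,
      Tendsto (fun k =>
          (μ {ω | (∑ i ∈ Finset.range (nk k), f (τ^[i] ω)) / a k ≤ t}).toReal)
        atTop
        (nhds (∫ x in Set.Iic t, (Real.sqrt (2 * π))⁻¹ * Real.exp (-x ^ 2 / 2)))) :
    ∀ᵐ ω ∂μ,
      (∀ C : ℝ, ∃ᶠ n in atTop, C < ∑ i ∈ Finset.range n, f (τ^[i] ω)) ∧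
      (∀ C : ℝ, ∃ᶠ n in atTop, (∑ i ∈ Finset.range n, f (τ^[i] ω)) < C) :=
  stmt2_general μ τ f hτ hf nk a hatop hclt
end

section
/- Let τ be the doubling map on the circle, b ∈ (0,1), and f = 1_{[0,b)} - (b/(1-b)) 1_{[b,1)}. Then the coboundary equation f(t) = g(t) - g(2t) (for almost every t) has no solution g ∈ L^2(𝕋). -/
open MeasureTheory

/-- The 1-periodic step function equal to `1` on `[0,b)` and `-b/(1-b)` on `[b,1)`. -/
noncomputable def stepf (b : ℝ) : ℝ → ℝ := fun x =>
  if Int.fract x < b then 1 else -b / (1 - b)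

/-!
Look at the sine coefficients `sₙ(h) = ∫₀¹ h(t) sin(2πnt) dt` at the frequencies `2ᵏ`.
Substituting `u = 2t`, a 1-periodic `g` satisfies `s_{2n}(g ∘ τ) = sₙ(g)`, and `s₁(g ∘ τ) = 0`
because `g(u) sin(πu)` is 1-antiperiodic. Hence `f = g - g ∘ τ` telescopes to
`s_{2ᵏ}(g) = ∑_{j ≤ k} s_{2ʲ}(f)`. For the step function `sₙ(f) = (1 - cos 2πnb) / (2πn(1-b))`,
which is nonnegative and positive for `n = 1`, so `s_{2ᵏ}(g) ≥ s₁(f) > 0` for all `k`,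
contradicting the Riemann–Lebesgue lemma.
-/

open Real Filter Topology Finset FourierTransform

section
variable {E : Type*} [NormedAddCommGroup E] [NormedSpace ℝ E] {F : ℝ → E} {T : ℝ}

theorem Function.Periodic.intervalIntegral_comp_int_mul (hF : Function.Periodic F T)
    (hi : IntervalIntegrable F volume 0 T) {n : ℤ} (hn : n ≠ 0) :
    ∫ t in 0..T, F (n * t) = ∫ t in 0..T, F t := by
  rcases eq_or_ne T 0 with rfl | hT
  · simp
  have hn' : (n : ℝ) ≠ 0 := Int.cast_ne_zero.mpr hn
  have h := hF.intervalIntegral_add_zsmul_eq n 0 (hF.intervalIntegrable₀ hT hi)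
  rw [zero_add, zero_add, zsmul_eq_mul, ← Int.cast_smul_eq_zsmul ℝ] at h
  rw [intervalIntegral.integral_comp_mul_left F hn', mul_zero, h, smul_smul, inv_mul_cancel₀ hn',
    one_smul]

theorem Function.Antiperiodic.intervalIntegral_comp_two_mul (hF : Function.Antiperiodic F T)
    (hi : IntervalIntegrable F volume 0 T) :
    ∫ t in 0..T, F (2 * t) = 0 := by
  have hshift : (fun t => F (t + T)) = fun t => -F t := funext hF
  have hi' : IntervalIntegrable F volume T (2 * T) := by
    have h : IntervalIntegrable (fun t => F (t + T)) volume 0 T := by rw [hshift]; exact hi.neg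
    rwa [IntervalIntegrable.comp_add_right_iff, zero_add, ← two_mul] at h
  have hsecond : ∫ t in T..2 * T, F t = -∫ t in 0..T, F t := by
    rw [← intervalIntegral.integral_neg, ← hshift, intervalIntegral.integral_comp_add_right,
      zero_add, two_mul]
  rw [intervalIntegral.integral_comp_mul_left F two_ne_zero, mul_zero,
    ← intervalIntegral.integral_add_adjacent_intervals hi hi', hsecond, add_neg_cancel, smul_zero]

end

theorem integral_sin_mul {c : ℝ} (hc : c ≠ 0) (a b : ℝ) :
    ∫ t in a..b, sin (c * t) = (cos (c * a) - cos (c * b)) / c := by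
  rw [intervalIntegral.integral_comp_mul_left (fun t => sin t) hc, integral_sin, smul_eq_mul,
    inv_mul_eq_div]

noncomputable def sinCoeff (g : ℝ → ℝ) (n : ℕ) : ℝ :=
  ∫ t in (0 : ℝ)..1, g t * sin (2 * π * n * t)

section
variable {g : ℝ → ℝ}

theorem IntervalIntegrable.mul_sin (hi : IntervalIntegrable g volume 0 1) (c : ℝ) :
    IntervalIntegrable (fun t => g t * sin (c * t)) volume 0 1 :=
  hi.mul_continuousOn (by fun_prop : Continuous fun t => sin (c * t)).continuousOn

theorem tendsto_sinCoeff_atTop (hi : IntervalIntegrable g volume 0 1) :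
    Tendsto (sinCoeff g) atTop (𝓝 0) := by
  set G : ℝ → ℂ := (Set.Ioc 0 1).indicator fun t => (g t : ℂ)
  have hG : Integrable G := (integrable_indicator_iff measurableSet_Ioc).mpr hi.1.ofReal
  have him (w : ℝ) : (𝓕 G w).im = -∫ t in (0 : ℝ)..1, g t * sin (2 * π * w * t) := by
    rw [Real.fourier_real_eq, ← Complex.imCLM_apply, ← ContinuousLinearMap.integral_comp_comm _
      (by simpa [mul_comm] using (Real.fourierIntegral_convergent_iff w).mpr hG),
      intervalIntegral.integral_of_le zero_le_one, ← integral_neg,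
      ← integral_indicator measurableSet_Ioc]
    congr 1 with v
    by_cases hv : v ∈ Set.Ioc (0 : ℝ) 1
    · simp only [G, Set.indicator_of_mem hv]
      rw [Complex.imCLM_apply, Circle.smul_def, Real.fourierChar_apply, smul_eq_mul,
        Complex.im_mul_ofReal, Complex.exp_ofReal_mul_I_im, mul_neg, sin_neg]
      ring_nf
    · simp [G, hv]
  have hnat : Tendsto (fun n : ℕ => (n : ℝ)) atTop (cocompact ℝ) :=
    tendsto_natCast_atTop_atTop.mono_right atTop_le_cocompact
  have hRL := ((Complex.continuous_im.tendsto 0).comp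
    ((Real.zero_at_infty_fourier G).comp hnat)).neg
  rw [Complex.zero_im, neg_zero] at hRL
  refine hRL.congr fun n => ?_
  simp [him, sinCoeff]

theorem sinCoeff_eq_sub_of_ae_eq {f h : ℝ → ℝ} (hg : IntervalIntegrable g volume 0 1)
    (hh : IntervalIntegrable h volume 0 1)
    (hfgh : ∀ᵐ t ∂volume.restrict (Set.Ico 0 1), f t = g t - h t) (n : ℕ) :
    sinCoeff f n = sinCoeff g n - sinCoeff h n := by
  rw [Measure.restrict_congr_set Ico_ae_eq_Ioc, ← Set.uIoc_of_le zero_le_one] at hfgh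
  rw [sinCoeff, sinCoeff, sinCoeff, ← intervalIntegral.integral_sub (hg.mul_sin _) (hh.mul_sin _)]
  refine intervalIntegral.integral_congr_ae_restrict ?_
  filter_upwards [hfgh] with t ht
  rw [ht, sub_mul]

variable (hg : Function.Periodic g 1) (hi : IntervalIntegrable g volume 0 1)
include hg hi

theorem Function.Periodic.intervalIntegrable_comp_two_mul :
    IntervalIntegrable (fun t => g (2 * t)) volume 0 1 := by
  simpa using (hg.intervalIntegrable₀ one_ne_zero hi 0 2).comp_mul_left (c := 2)

theorem sinCoeff_comp_two_mul_two_mul (n : ℕ) :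
    sinCoeff (fun t => g (2 * t)) (2 * n) = sinCoeff g n := by
  set F : ℝ → ℝ := fun u => g u * sin (2 * π * n * u)
  have hF : Function.Periodic F 1 := fun u => by
    simp only [F, hg u, mul_add, mul_one]
    rw [show 2 * π * n = n * (2 * π) by ring, sin_add_nat_mul_two_pi]
  have h := hF.intervalIntegral_comp_int_mul (hi.mul_sin _) (n := 2) two_ne_zero
  rw [Int.cast_ofNat] at h
  rw [sinCoeff, sinCoeff, ← h]
  congr 1 with t
  simp only [F]
  push_cast
  ring_nf

theorem sinCoeff_comp_two_mul_one :
    sinCoeff (fun t => g (2 * t)) 1 = 0 := by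
  set F : ℝ → ℝ := fun u => g u * sin (π * u)
  have hF : Function.Antiperiodic F 1 := fun u => by
    simp only [F, hg u, mul_add, mul_one, sin_add_pi, mul_neg]
  refine Eq.trans ?_ (hF.intervalIntegral_comp_two_mul (hi.mul_sin _))
  unfold sinCoeff
  congr 1 with t
  simp only [F]
  push_cast
  ring_nf

theorem sinCoeff_two_pow_eq_sum_of_coboundary {f : ℝ → ℝ}
    (hfg : ∀ᵐ t ∂volume.restrict (Set.Ico 0 1), f t = g t - g (2 * t)) (k : ℕ) :
    sinCoeff g (2 ^ k) = ∑ j ∈ range (k + 1), sinCoeff f (2 ^ j) := by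
  have hdiff := sinCoeff_eq_sub_of_ae_eq hi (hg.intervalIntegrable_comp_two_mul hi) hfg
  induction k with
  | zero => simp [hdiff, sinCoeff_comp_two_mul_one hg hi]
  | succ k ih =>
    rw [sum_range_succ, ← ih, hdiff, pow_succ', sinCoeff_comp_two_mul_two_mul hg hi]
    ring

end

section
variable {b : ℝ}

theorem sinCoeff_stepf (hb0 : 0 ≤ b) (hb1 : b < 1) {n : ℕ} (hn : n ≠ 0) :
    sinCoeff (stepf b) n = (1 - cos (2 * π * n * b)) / (2 * π * n * (1 - b)) := by
  set s : ℝ → ℝ := fun t => sin (2 * π * n * t)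
  have hs (a c : ℝ) : IntervalIntegrable s volume a c :=
    (by fun_prop : Continuous s).intervalIntegrable a c
  have hfract {t : ℝ} (h0 : 0 < t) (h1 : t < 1) : Int.fract t = t :=
    Int.fract_eq_self.mpr ⟨h0.le, h1⟩
  have hlow : Set.EqOn (fun t => stepf b t * s t) s (Set.Ioo 0 b) := fun t ⟨h0, hb⟩ => by
    simp [stepf, hfract h0 (hb.trans hb1), hb]
  have hhigh : Set.EqOn (fun t => stepf b t * s t) (fun t => -(b / (1 - b)) * s t)
      (Set.Ioo b 1) := fun t ⟨hb, h1⟩ => by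
    simp [stepf, hfract (hb0.trans_lt hb) h1, hb.not_gt, neg_div]
  have hb1' : 1 - b ≠ 0 := by linarith
  have hc : 2 * π * n ≠ 0 := by positivity
  rw [sinCoeff, ← intervalIntegral.integral_add_adjacent_intervals (b := b)
      ((intervalIntegrable_congr_uIoo (Set.uIoo_of_le hb0 ▸ hlow)).mpr (hs 0 b))
      ((intervalIntegrable_congr_uIoo (Set.uIoo_of_le hb1.le ▸ hhigh)).mpr ((hs b 1).const_mul _)),
    intervalIntegral.integral_congr_Ioo_of_le hb0 hlow,
    intervalIntegral.integral_congr_Ioo_of_le hb1.le hhigh, intervalIntegral.integral_const_mul,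
    integral_sin_mul hc, integral_sin_mul hc, mul_zero, mul_one, cos_zero,
    show 2 * π * n = n * (2 * π) by ring, cos_nat_mul_two_pi]
  field_simp
  ring

theorem sinCoeff_stepf_nonneg (hb0 : 0 ≤ b) (hb1 : b < 1) {n : ℕ} (hn : n ≠ 0) :
    0 ≤ sinCoeff (stepf b) n := by
  rw [sinCoeff_stepf hb0 hb1 hn]
  have : 0 < 1 - b := by linarith
  exact div_nonneg (by linarith [cos_le_one (2 * π * n * b)]) (by positivity)

theorem sinCoeff_stepf_one_pos (hb0 : 0 < b) (hb1 : b < 1) :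
    0 < sinCoeff (stepf b) 1 := by
  have hcos : cos (2 * π * b) ≠ 1 := by
    rw [Ne, cos_eq_one_iff_of_lt_of_lt (by nlinarith [pi_pos]) (by nlinarith [pi_pos])]
    positivity
  rw [sinCoeff_stepf hb0.le hb1 one_ne_zero, Nat.cast_one, mul_one]
  have : 0 < 1 - b := by linarith
  exact div_pos (by linarith [(cos_le_one (2 * π * b)).lt_of_ne hcos]) (by positivity)

end

/-- For the doubling map and `b ∈ (0,1)`, the coboundary equation
`f(t) = g(t) - g(2t)` (a.e. on the circle) has no solution `g ∈ L²(𝕋)`: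
there is no 1-periodic `g`, square-integrable on `[0,1)`, solving it a.e. -/
theorem stmt7 (b : ℝ) (hb : b ∈ Set.Ioo (0:ℝ) 1) :
    ¬ ∃ g : ℝ → ℝ, Function.Periodic g 1 ∧
        MemLp g 2 (volume.restrict (Set.Ico (0:ℝ) 1)) ∧
        ∀ᵐ t ∂(volume.restrict (Set.Ico (0:ℝ) 1)), stepf b t = g t - g (2 * t) := by
  rintro ⟨g, hper, hg2, hcob⟩
  have hi : IntervalIntegrable g volume 0 1 :=
    (intervalIntegrable_iff_integrableOn_Ico_of_le zero_le_one).mpr (hg2.integrable one_le_two)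
  have hbound (k : ℕ) : sinCoeff (stepf b) 1 ≤ sinCoeff g (2 ^ k) :=
    calc sinCoeff (stepf b) 1 = sinCoeff (stepf b) (2 ^ 0) := by rw [pow_zero]
      _ ≤ ∑ j ∈ range (k + 1), sinCoeff (stepf b) (2 ^ j) :=
        single_le_sum (fun j _ => sinCoeff_stepf_nonneg hb.1.le hb.2 (pow_ne_zero j two_ne_zero))
          (mem_range.mpr k.succ_pos)
      _ = sinCoeff g (2 ^ k) := (sinCoeff_two_pow_eq_sum_of_coboundary hper hi hcob k).symm
  have hlim := (tendsto_sinCoeff_atTop hi).comp (tendsto_pow_atTop_atTop_of_one_lt one_lt_two)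
  exact (sinCoeff_stepf_one_pos hb.1 hb.2).not_ge (ge_of_tendsto' hlim hbound)
end

section
/- Let X be a separable Fréchet space (or Banach space) and (T_n)_{n≥1} a sequence of continuous linear operators on X. Suppose there are subsets A, B of X whose linear spans are dense, such that every a ∈ A is an eigenvector of each T_n with eigenvalues λ(T_n, a) satisfying |λ(T_n, a)| → 0, and every b ∈ B is an eigenvector of each T_n with |λ(T_n, b)| → ∞ as n → ∞. Then (T_n) is topologically mixing: for all nonempty open sets U, V there is N such that T_n(U) ∩ V ≠ ∅ for all n ≥ N. -/
/-!
Every `x` in the span of `A` has `T n x → 0`, and every `y` in the span of `B` is hit as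
`y = T n (z n)` with `z n → 0` (take `z n = λ(T n, b)⁻¹ • b` on eigenvectors). Given open
`U`, `V`, pick such `x ∈ U` and `y ∈ V` by density; then `x + z n ∈ U` and
`T n (x + z n) = T n x + y ∈ V` for all large `n`.
-/

open Filter Topology

section Submodules

variable {ι R X : Type*} [Semiring R] [TopologicalSpace R] [AddCommMonoid X] [Module R X]
  [TopologicalSpace X] [ContinuousAdd X] [ContinuousSMul R X]

def orbitNullSubmodule (T : ι → X →ₗ[R] X) (l : Filter ι) : Submodule R X where
  carrier := {x | Tendsto (fun i => T i x) l (𝓝 0)}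
  add_mem' {x y} hx hy := by simpa using hx.add hy
  zero_mem' := by simpa using tendsto_const_nhds
  smul_mem' c x hx := by simpa using hx.const_smul c

def vanishingPreimageSubmodule (T : ι → X →ₗ[R] X) (l : Filter ι) : Submodule R X where
  carrier := {y | ∃ z : ι → X, Tendsto z l (𝓝 0) ∧ ∀ᶠ i in l, T i (z i) = y}
  add_mem' := by
    rintro x y ⟨z, hz, hzx⟩ ⟨w, hw, hwy⟩
    refine ⟨fun i => z i + w i, by simpa using hz.add hw, ?_⟩
    filter_upwards [hzx, hwy] with i hi hi'
    simp [hi, hi']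
  zero_mem' := ⟨0, tendsto_const_nhds, by simp⟩
  smul_mem' := by
    rintro c y ⟨z, hz, hzy⟩
    refine ⟨fun i => c • z i, by simpa using hz.const_smul c, ?_⟩
    filter_upwards [hzy] with i hi
    simp [hi]

theorem eigenvector_mem_orbitNullSubmodule {T : ι → X →ₗ[R] X} {l : Filter ι} {a : X}
    {μ : ι → R} (ha : ∀ i, T i a = μ i • a) (hμ : Tendsto μ l (𝓝 0)) :
    a ∈ orbitNullSubmodule T l := by
  simpa [orbitNullSubmodule, ha] using hμ.smul_const a

theorem eventually_image_inter_nonempty_of_dense {T : ι → X →ₗ[R] X} {l : Filter ι}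
    (hnull : Dense (orbitNullSubmodule T l : Set X))
    (hpre : Dense (vanishingPreimageSubmodule T l : Set X)) {U V : Set X} (hU : IsOpen U)
    (hV : IsOpen V) (hUne : U.Nonempty) (hVne : V.Nonempty) :
    ∀ᶠ i in l, (T i '' U ∩ V).Nonempty := by
  obtain ⟨x, hxnull, hxU⟩ := hnull.exists_mem_open hU hUne
  obtain ⟨y, ⟨z, hz, hzy⟩, hyV⟩ := hpre.exists_mem_open hV hVne
  have hperturbed : Tendsto (fun i => x + z i) l (𝓝 x) := by
    simpa using tendsto_const_nhds.add hz
  have himage : Tendsto (fun i => T i x + y) l (𝓝 y) := by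
    simpa using (show Tendsto (fun i => T i x) l (𝓝 0) from hxnull).add tendsto_const_nhds
  filter_upwards [hperturbed.eventually (hU.mem_nhds hxU),
    himage.eventually (hV.mem_nhds hyV), hzy] with i hiU hiV hi
  exact ⟨T i (x + z i), ⟨x + z i, hiU, rfl⟩, by rwa [map_add, hi]⟩

end Submodules

theorem eigenvector_mem_vanishingPreimageSubmodule {ι 𝕜 X : Type*} [NormedField 𝕜]
    [AddCommMonoid X] [Module 𝕜 X] [TopologicalSpace X] [ContinuousAdd X] [ContinuousSMul 𝕜 X]
    {T : ι → X →ₗ[𝕜] X} {l : Filter ι} {b : X} {μ : ι → 𝕜}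
    (hb : ∀ i, T i b = μ i • b) (hμ : Tendsto (fun i => ‖μ i‖) l atTop) :
    b ∈ vanishingPreimageSubmodule T l := by
  have hinv : Tendsto (fun i => (μ i)⁻¹) l (𝓝 0) :=
    tendsto_inv₀_cobounded.comp (tendsto_norm_atTop_iff_cobounded.mp hμ)
  refine ⟨fun i => (μ i)⁻¹ • b, by simpa using hinv.smul_const b, ?_⟩
  filter_upwards [hμ.eventually_ne_atTop 0] with i hi
  rw [map_smul, hb, smul_smul, inv_mul_cancel₀ (norm_ne_zero_iff.mp hi), one_smul]

theorem stmt10_general {X : Type*} [NormedAddCommGroup X] [NormedSpace ℂ X]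
    (T : ℕ → X →L[ℂ] X) (A B : Set X) (lam : X → ℕ → ℂ)
    (hAdense : Dense (Submodule.span ℂ A : Set X))
    (hBdense : Dense (Submodule.span ℂ B : Set X))
    (hA : ∀ a ∈ A, a ≠ 0 ∧ (∀ n, T n a = lam a n • a) ∧
      Tendsto (fun n => ‖lam a n‖) atTop (nhds 0))
    (hB : ∀ b ∈ B, b ≠ 0 ∧ (∀ n, T n b = lam b n • b) ∧
      Tendsto (fun n => ‖lam b n‖) atTop atTop) :
    ∀ U V : Set X, IsOpen U → IsOpen V → U.Nonempty → V.Nonempty →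
      ∃ N : ℕ, ∀ n ≥ N, ((T n) '' U ∩ V).Nonempty := by
  intro U V hU hV hUne hVne
  let S : ℕ → X →ₗ[ℂ] X := fun n => T n
  have hnull : Dense (orbitNullSubmodule S atTop : Set X) :=
    hAdense.mono <| Submodule.span_le.2 fun a ha =>
      eigenvector_mem_orbitNullSubmodule (hA a ha).2.1
        (tendsto_zero_iff_norm_tendsto_zero.2 (hA a ha).2.2)
  have hpre : Dense (vanishingPreimageSubmodule S atTop : Set X) :=
    hBdense.mono <| Submodule.span_le.2 fun b hb =>
      eigenvector_mem_vanishingPreimageSubmodule (hB b hb).2.1 (hB b hb).2.2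
  exact Eventually.exists_forall_of_atTop
    (eventually_image_inter_nonempty_of_dense hnull hpre hU hV hUne hVne)

/-- Eigenvalue criterion for topological mixing: if the spans of `A` and `B` are dense,
every element of `A` is a common eigenvector with eigenvalues tending to `0`, and every
element of `B` is a common eigenvector with eigenvalues tending to `∞` in modulus, then
the sequence `(T n)` is topologically mixing. -/
theorem stmt10 {X : Type*} [NormedAddCommGroup X] [NormedSpace ℂ X] [CompleteSpace X]
    [TopologicalSpace.SeparableSpace X]
    (T : ℕ → X →L[ℂ] X) (A B : Set X) (lam : X → ℕ → ℂ)
    (hAdense : Dense (Submodule.span ℂ A : Set X))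
    (hBdense : Dense (Submodule.span ℂ B : Set X))
    (hA : ∀ a ∈ A, a ≠ 0 ∧ (∀ n, T n a = lam a n • a) ∧
      Tendsto (fun n => ‖lam a n‖) atTop (nhds 0))
    (hB : ∀ b ∈ B, b ≠ 0 ∧ (∀ n, T n b = lam b n • b) ∧
      Tendsto (fun n => ‖lam b n‖) atTop atTop) :
    ∀ U V : Set X, IsOpen U → IsOpen V → U.Nonempty → V.Nonempty →
      ∃ N : ℕ, ∀ n ≥ N, ((T n) '' U ∩ V).Nonempty :=
  stmt10_general T A B lam hAdense hBdense hA hB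
end

section
/- Let X be a separable Banach space without isolated points (i.e., X ≠ {0}), T : X → X an invertible bounded operator, and f ∈ X such that the full two-sided orbit {T^k f : k ∈ ℤ} is dense in X. Then T is topologically transitive: for all nonempty open U, V ⊆ X there exists n ≥ 1 with T^n(U) ∩ V ≠ ∅. -/
/-- If the full two-sided orbit `{T^k f : k ∈ ℤ}` of some vector `f` under an invertible
bounded operator `T` is dense, then `T` is topologically transitive: for all nonempty
open `U, V` there is `n ≥ 1` with `T^n(U) ∩ V ≠ ∅`. -/
theorem stmt13 {X : Type*} [NormedAddCommGroup X] [NormedSpace ℝ X] [CompleteSpace X]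
    [Nontrivial X] [TopologicalSpace.SeparableSpace X]
    (T : X ≃L[ℝ] X) (f : X)
    (hdense : Dense {y : X | ∃ k : ℤ, y = (T ^ k) f}) :
    ∀ U V : Set X, IsOpen U → IsOpen V → U.Nonempty → V.Nonempty →
      ∃ n : ℕ, 1 ≤ n ∧ ((⇑T)^[n] '' U ∩ V).Nonempty := by
  intro U V hU hV hUne hVne
  -- basic computation rules
  have hiter : ∀ (n : ℕ) (x : X), (⇑T)^[n] x = (T ^ (n : ℤ)) x := by
    intro n x
    rw [zpow_natCast]
    induction n generalizing x with
    | zero => rfl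
    | succ k ih => rw [Function.iterate_succ_apply, ih, pow_succ]; rfl
  have happ : ∀ (a b : ℤ) (x : X), (T ^ (a + b)) x = (T ^ a) ((T ^ b) x) := by
    intro a b x; rw [zpow_add]; rfl
  -- key lemma : if an open nonempty set is contained in the closure of a one-sided
  -- orbit, then arbitrarily large exponents hit it
  have key : ∀ (e : ℕ → ℤ) (A : Set X), IsOpen A → A.Nonempty →
      A ⊆ closure {y : X | ∃ n : ℕ, y = (T ^ (e n)) f} →
      ∀ M : ℕ, ∃ n : ℕ, M < n ∧ (T ^ (e n)) f ∈ A := by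
    intro e A hA hAne hAcl M
    set F : Set X := (fun n : ℕ => (T ^ (e n)) f) '' (Set.Iic M) with hFdef
    have hFfin : F.Finite := (Set.finite_Iic M).image _
    have hFc : Dense Fᶜ := hFfin.countable.dense_compl ℝ
    obtain ⟨x, hxF, hxA⟩ := hFc.exists_mem_open hA hAne
    have hx : x ∈ closure {y : X | ∃ n : ℕ, y = (T ^ (e n)) f} := hAcl hxA
    rw [mem_closure_iff] at hx
    have hopen : IsOpen (A ∩ Fᶜ) := hA.inter hFfin.isClosed.isOpen_compl
    obtain ⟨y, ⟨hyA, hyF⟩, n, rfl⟩ := hx (A ∩ Fᶜ) hopen ⟨hxA, hxF⟩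
    refine ⟨n, ?_, hyA⟩
    by_contra h
    exact hyF ⟨n, Set.mem_Iic.2 (Nat.le_of_not_lt h), rfl⟩
  -- the two one-sided closures cover X
  set Cp := closure {y : X | ∃ n : ℕ, y = (T ^ ((n : ℤ))) f} with hCp
  set Cm := closure {y : X | ∃ n : ℕ, y = (T ^ (-((n : ℤ) + 1))) f} with hCm
  have hcover : ∀ x : X, x ∈ Cp ∪ Cm := by
    intro x
    have hx := hdense x
    have hsub : {y : X | ∃ k : ℤ, y = (T ^ k) f} ⊆ Cp ∪ Cm := by
      rintro y ⟨k, rfl⟩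
      rcases le_or_gt 0 k with hk | hk
      · refine Or.inl (subset_closure ⟨k.toNat, ?_⟩)
        rw [Int.toNat_of_nonneg hk]
      · refine Or.inr (subset_closure ⟨(-k - 1).toNat, ?_⟩)
        have : -(((-k - 1).toNat : ℤ) + 1) = k := by omega
        rw [this]
    have h2 := closure_mono hsub hx
    rwa [(isClosed_closure.union isClosed_closure).closure_eq] at h2
  -- one of them has nonempty interior
  have hW : (interior Cp).Nonempty ∨ (interior Cm).Nonempty := by
    by_contra h
    push_neg at h
    have h1 : Dense Cpᶜ := interior_eq_empty_iff_dense_compl.1 h.1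
    have h2 : Dense Cmᶜ := interior_eq_empty_iff_dense_compl.1 h.2
    have h3 := h1.inter_of_isOpen_left h2 isClosed_closure.isOpen_compl
    obtain ⟨x, hx1, hx2⟩ := h3.nonempty
    exact (hcover x).elim hx1 hx2
  -- extract a window W with a one-sided orbit dense in it
  obtain ⟨e, hmode, W, hWo, hWne, hWsub⟩ :
      ∃ (e : ℕ → ℤ), ((∀ m n : ℕ, e n - e m = (n : ℤ) - m) ∨
        (∀ m n : ℕ, e m - e n = (n : ℤ) - m)) ∧
      ∃ W : Set X, IsOpen W ∧ W.Nonempty ∧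
        W ⊆ closure {y : X | ∃ n : ℕ, y = (T ^ (e n)) f} := by
    rcases hW with h | h
    · exact ⟨fun n => (n : ℤ), Or.inl (by intro m n; ring), interior Cp,
        isOpen_interior, h, interior_subset⟩
    · exact ⟨fun n => -((n : ℤ) + 1), Or.inr (by intro m n; push_cast; ring), interior Cm,
        isOpen_interior, h, interior_subset⟩
  -- orbit points in W, U, V
  obtain ⟨_, ⟨a, rfl⟩, haW⟩ := hdense.exists_mem_open hWo hWne
  obtain ⟨_, ⟨i, rfl⟩, hiU⟩ := hdense.exists_mem_open hU hUne
  obtain ⟨_, ⟨j, rfl⟩, hjV⟩ := hdense.exists_mem_open hV hVne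
  -- pulled-back copies of U and V inside W
  set U' : Set X := W ∩ (fun z => (T ^ (i - a)) z) ⁻¹' U with hU'def
  set V' : Set X := W ∩ (fun z => (T ^ (j - a)) z) ⁻¹' V with hV'def
  have hU'o : IsOpen U' := hWo.inter (hU.preimage (T ^ (i - a)).continuous)
  have hV'o : IsOpen V' := hWo.inter (hV.preimage (T ^ (j - a)).continuous)
  have hU'ne : U'.Nonempty := by
    refine ⟨(T ^ a) f, haW, ?_⟩
    show (T ^ (i - a)) ((T ^ a) f) ∈ U
    rw [← happ]
    simpa using hiU
  have hV'ne : V'.Nonempty := by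
    refine ⟨(T ^ a) f, haW, ?_⟩
    show (T ^ (j - a)) ((T ^ a) f) ∈ V
    rw [← happ]
    simpa using hjV
  have hU'cl : U' ⊆ closure {y : X | ∃ n : ℕ, y = (T ^ (e n)) f} :=
    Set.inter_subset_left.trans hWsub
  have hV'cl : V' ⊆ closure {y : X | ∃ n : ℕ, y = (T ^ (e n)) f} :=
    Set.inter_subset_left.trans hWsub
  -- big gap lemma
  have hBig : ∀ M : ℕ, ∃ α β : ℤ, (T ^ α) f ∈ U' ∧ (T ^ β) f ∈ V' ∧ (M : ℤ) ≤ β - α := by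
    intro M
    rcases hmode with hm | hm
    · obtain ⟨p, _, hp⟩ := key e U' hU'o hU'ne hU'cl 0
      obtain ⟨q, hq, hqV⟩ := key e V' hV'o hV'ne hV'cl (p + M)
      refine ⟨e p, e q, hp, hqV, ?_⟩
      have := hm p q
      omega
    · obtain ⟨p, _, hp⟩ := key e V' hV'o hV'ne hV'cl 0
      obtain ⟨q, hq, hqU⟩ := key e U' hU'o hU'ne hU'cl (p + M)
      refine ⟨e q, e p, hqU, hp, ?_⟩
      have := hm p q
      omega
  -- conclude
  obtain ⟨α, β, hα, hβ, hge⟩ := hBig (1 + i - j).toNat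
  have hge' : 1 + i - j ≤ β - α := le_trans (Int.self_le_toNat _) hge
  set n : ℕ := (β - α + j - i).toNat with hn
  have hn1 : 1 ≤ n := by omega
  have hn2 : (n : ℤ) = β - α + j - i := by omega
  refine ⟨n, hn1, (⇑T)^[n] ((T ^ (i - a)) ((T ^ α) f)), ⟨_, hα.2, rfl⟩, ?_⟩
  have hexp : (n : ℤ) + (i - a + α) = j - a + β := by omega
  have hc : (T ^ ((n : ℤ))) ((T ^ (i - a)) ((T ^ α) f)) = (T ^ (j - a)) ((T ^ β) f) := by
    calc (T ^ ((n : ℤ))) ((T ^ (i - a)) ((T ^ α) f))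
        = (T ^ ((n : ℤ) + (i - a + α))) f := by rw [happ, happ]
      _ = (T ^ (j - a + β)) f := by rw [hexp]
      _ = (T ^ (j - a)) ((T ^ β) f) := happ _ _ _
  rw [hiter, hc]
  exact hβ.2
end

section
/- Let X be a complete separable metric space, τ an ergodic measure-preserving transformation of a probability space (Ω, μ), and T : Ω → (continuous maps X → X). Define T_n(ω) = T(τ^{n-1}ω) ∘ ⋯ ∘ T(τω) ∘ T(ω). If x ∈ X has dense orbit {T_n(ω) x : n ≥ 1} for some ω, and X has no isolated points, then the point T(ω)x has dense orbit under (T_n(τω))_{n≥1}; consequently the set A = {ω : (T_n(ω))_{n≥1} is universal} satisfies τ(A) ⊆ A. -/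
/-- The random product `T_n(ω) = T(τ^{n-1}ω) ∘ ⋯ ∘ T(τω) ∘ T(ω)`, defined by
`T_0(ω) = id` and `T_{n+1}(ω) = T_n(τω) ∘ T(ω)`. -/
def randProd {Ω X : Type*} (τ : Ω → Ω) (T : Ω → X → X) (ω : Ω) (n : ℕ) : X → X :=
  Nat.rec (motive := fun _ => Ω → X → X)
    (fun _ => id) (fun _ ih ω' => ih (τ ω') ∘ T ω') n ω

lemma randProd_succ {Ω X : Type*} (τ : Ω → Ω) (T : Ω → X → X) (ω : Ω) (n : ℕ) (x : X) :
    randProd τ T ω (n + 1) x = randProd τ T (τ ω) n (T ω x) := rfl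

/-- If `x` has dense orbit under `(T_n(ω))_{n ≥ 1}` and `X` has no isolated points,
then `T(ω) x` has dense orbit under `(T_n(τω))_{n ≥ 1}`; consequently the set
`A = {ω : (T_n(ω))_{n≥1} is universal}` satisfies `τ(A) ⊆ A`. -/
theorem stmt17 {Ω X : Type*} [MetricSpace X] [CompleteSpace X]
    [TopologicalSpace.SeparableSpace X] [MeasurableSpace Ω]
    (μ : MeasureTheory.Measure Ω) [MeasureTheory.IsProbabilityMeasure μ]
    (τ : Ω → Ω) (hτ : Ergodic τ μ)
    (T : Ω → X → X) (hT : ∀ ω, Continuous (T ω))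
    (hiso : ∀ x : X, Filter.NeBot (nhdsWithin x {x}ᶜ)) :
    (∀ ω : Ω, ∀ x : X,
      Dense {y : X | ∃ n : ℕ, 1 ≤ n ∧ y = randProd τ T ω n x} →
      Dense {y : X | ∃ n : ℕ, 1 ≤ n ∧ y = randProd τ T (τ ω) n (T ω x)}) ∧
    τ '' {ω : Ω | ∃ x : X, Dense {y : X | ∃ n : ℕ, 1 ≤ n ∧ y = randProd τ T ω n x}}
      ⊆ {ω : Ω | ∃ x : X, Dense {y : X | ∃ n : ℕ, 1 ≤ n ∧ y = randProd τ T ω n x}} := by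
  have key : ∀ ω : Ω, ∀ x : X,
      Dense {y : X | ∃ n : ℕ, 1 ≤ n ∧ y = randProd τ T ω n x} →
      Dense {y : X | ∃ n : ℕ, 1 ≤ n ∧ y = randProd τ T (τ ω) n (T ω x)} := by
    intro ω x hd
    have := hiso (randProd τ T ω 1 x)
    have hd' := hd.diff_singleton (randProd τ T ω 1 x)
    refine hd'.mono ?_
    rintro y ⟨⟨n, hn, rfl⟩, hne⟩
    rcases n with _ | m
    · omega
    rcases m with _ | m
    · exact absurd rfl hne
    exact ⟨m + 1, by omega, (randProd_succ τ T ω (m + 1) x).symm⟩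
  refine ⟨key, ?_⟩
  rintro _ ⟨ω, ⟨x, hd⟩, rfl⟩
  exact ⟨T ω x, key ω x hd⟩
end
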